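/- Every cross product algebra is a quasicomposition algebra with defect 1: if (A, ×, h) is anticommutative with x×(x×y) = −h(x,x)y + h(x,y)x and h positive definite and A nonzero, then with x^σ = −x the identity x×(x^σ×(x×y)) = h(x,x)·(x×y) holds, and for nonzero x the kernel of L(x^σ)L(x) is the one-dimensional span of x. -/
import Mathlib


/-- Every cross product algebra is a quasicomposition algebra with defect 1:
with `x^σ = −x`, `x×(x^σ×(x×y)) = h(x,x)·(x×y)` holds, and for nonzero `x` the kernel of
`L(x^σ)L(x)` is the span of `x`. -/
theorem cross_product_quasicomposition
    {A : Type*} [AddCommGroup A] [Module ℝ A] [FiniteDimensional ℝ A] [Nontrivial A]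
    (mul : A →ₗ[ℝ] A →ₗ[ℝ] A)
    (hanti : ∀ x y : A, mul x y = - mul y x)
    (h : A →ₗ[ℝ] A →ₗ[ℝ] ℝ)
    (hsymm : ∀ x y : A, h x y = h y x)
    (hpos : ∀ x : A, x ≠ 0 → 0 < h x x)
    (hinv : ∀ x y z : A, h (mul x y) z = h x (mul y z))
    (hcross : ∀ x y : A, mul x (mul x y) = - (h x x • y) + h x y • x) :
    (∀ x y : A, mul x (mul (-x) (mul x y)) = h x x • mul x y) ∧
    (∀ x : A, x ≠ 0 →
      LinearMap.ker (mul (-x) ∘ₗ mul x) = Submodule.span ℝ {x}) := by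
  have hxx0 : ∀ x : A, mul x x = 0 := by
    intro x
    have h1 : mul x x = - mul x x := hanti x x
    have h2 : (2 : ℝ) • mul x x = 0 := by
      rw [two_smul]; nth_rewrite 1 [h1]; abel
    simpa using (smul_eq_zero.mp h2).resolve_left (by norm_num)
  have hneg : ∀ x z : A, mul (-x) z = - mul x z := by
    intro x z
    rw [map_neg, LinearMap.neg_apply]
  have horth : ∀ x y : A, h x (mul x y) = 0 := by
    intro x y
    rw [← hinv x x y, hxx0]
    simp
  have key : ∀ x y : A, mul (-x) (mul x y) = h x x • y - h x y • x := by
    intro x y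
    rw [hneg, hcross]
    abel
  constructor
  · intro x y
    rw [key, map_sub, map_smul, map_smul, hxx0, smul_zero, sub_zero]
  · intro x hx
    have hxxpos := hpos x hx
    ext y
    simp only [LinearMap.mem_ker, LinearMap.comp_apply, Submodule.mem_span_singleton, key]
    constructor
    · intro hy
      refine ⟨h x y / h x x, ?_⟩
      have : h x x • y = h x y • x := sub_eq_zero.mp hy
      rw [div_eq_mul_inv, mul_comm, mul_smul, ← this, inv_smul_smul₀ hxxpos.ne']
    · rintro ⟨a, rfl⟩
      simp [smul_smul, mul_comm]
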